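/- arXiv:1502.06737 — 6 statements merged into one kernel-verified Lean document; each statement's English description precedes it below -/
import Mathlib

section
/- Under the same hypotheses as the descent-direction lemma (h convex in its first argument with unique minimizer, and ∇₁h(x,x)ᵀd = ∇f(x)ᵀd for feasible directions d), if y = argmin_{z∈Ω} h(z,x) and ∇f(x)ᵀ(y − x) = 0, then y = x. -/
open scoped RealInnerProductSpace

theorem statement1 {n : ℕ} (Ω : Set (EuclideanSpace ℝ (Fin n)))
    (hΩc : IsClosed Ω) (hΩconv : Convex ℝ Ω) (hΩne : Ω.Nonempty)
    (f : EuclideanSpace ℝ (Fin n) → ℝ) (hf : ContDiff ℝ 1 f)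
    (h : EuclideanSpace ℝ (Fin n) → EuclideanSpace ℝ (Fin n) → ℝ)
    (hsmooth : ∀ z ∈ Ω, ContDiff ℝ 1 (fun u => h u z))
    (hconv : ∀ z ∈ Ω, ∀ x ∈ Ω, ∀ y ∈ Ω,
      h x z + ⟪gradient (fun u => h u z) x, y - x⟫ ≤ h y z)
    (hgrad : ∀ x ∈ Ω, ∀ y ∈ Ω,
      ⟪gradient (fun u => h u x) x, y - x⟫ = ⟪gradient f x, y - x⟫)
    (huniq : ∀ z ∈ Ω, ∃! w, w ∈ Ω ∧ ∀ u ∈ Ω, h w z ≤ h u z)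
    (x y : EuclideanSpace ℝ (Fin n)) (hx : x ∈ Ω)
    (hyΩ : y ∈ Ω) (hymin : ∀ u ∈ Ω, h y x ≤ h u x)
    (hzero : ⟪gradient f x, y - x⟫ = 0) :
    y = x := by
  have h1 : h x x + ⟪gradient (fun u => h u x) x, y - x⟫ ≤ h y x := hconv x hx x hx y hyΩ
  rw [hgrad x hx y hyΩ, hzero, add_zero] at h1
  obtain ⟨w, hw, hwu⟩ := huniq x hx
  have hxmin : ∀ u ∈ Ω, h x x ≤ h u x := fun u hu => h1.trans (hymin u hu)
  rw [hwu y ⟨hyΩ, hymin⟩, hwu x ⟨hx, hxmin⟩]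
end

section
/- Let Ω ⊆ ℝⁿ be closed and convex, f : ℝⁿ → ℝ be C¹, and h : Ω × Ω → ℝ be convex and C¹ in its first argument with a unique minimizer of h(·,z) over Ω for every z ∈ Ω, satisfying ∇₁h(x,x)ᵀ(y−x) = ∇f(x)ᵀ(y−x) for all x,y ∈ Ω. Define p(x) = argmin_{z∈Ω} h(z,x). Then a point x ∈ Ω is stationary for min_{x∈Ω} f(x) (i.e., ∇f(x)ᵀ(y − x) ≥ 0 for all y ∈ Ω) if and only if p(x) = x. -/
/-! Both conditions say that `x` minimizes `h(·, x)` over `Ω`. Since `h(·, x)` is convex, this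
is equivalent to the first-order condition `⟪∇₁h(x, x), y - x⟫ ≥ 0` on `Ω`, which is the
stationarity of `x` for `f` because `∇₁h(x, x)` and `∇f(x)` agree on the directions `y - x`;
and since the minimizer of `h(·, x)` is unique, it is equivalent to `p x = x`. -/

open scoped RealInnerProductSpace

section FirstOrder

variable {E : Type*} [NormedAddCommGroup E] [InnerProductSpace ℝ E] [CompleteSpace E]
  {f : E → ℝ} {s : Set E} {x : E}

theorem IsMinOn.inner_gradient_sub_nonneg (hmin : IsMinOn f s x) (hs : Convex ℝ s)
    (hx : x ∈ s) (hf : DifferentiableAt ℝ f x) {y : E} (hy : y ∈ s) :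
    0 ≤ ⟪gradient f x, y - x⟫ :=
  hmin.localize.hasFDerivWithinAt_nonneg hf.hasGradientAt.hasFDerivAt.hasFDerivWithinAt
    (sub_mem_posTangentConeAt_of_segment_subset (hs.segment_subset hx hy))

theorem isMinOn_iff_inner_gradient_sub_nonneg (hs : Convex ℝ s) (hx : x ∈ s)
    (hf : DifferentiableAt ℝ f x)
    (hsupport : ∀ y ∈ s, f x + ⟪gradient f x, y - x⟫ ≤ f y) :
    IsMinOn f s x ↔ ∀ y ∈ s, 0 ≤ ⟪gradient f x, y - x⟫ := by
  refine ⟨fun hmin y hy ↦ hmin.inner_gradient_sub_nonneg hs hx hf hy, fun hstat ↦ ?_⟩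
  exact isMinOn_iff.2 fun y hy ↦ by linarith [hsupport y hy, hstat y hy]

end FirstOrder

theorem statement2_general {n : ℕ} (Ω : Set (EuclideanSpace ℝ (Fin n)))
    (hΩconv : Convex ℝ Ω)
    (f : EuclideanSpace ℝ (Fin n) → ℝ)
    (h : EuclideanSpace ℝ (Fin n) → EuclideanSpace ℝ (Fin n) → ℝ)
    (hsmooth : ∀ z ∈ Ω, ContDiff ℝ 1 (fun u => h u z))
    (hconv : ∀ z ∈ Ω, ∀ x ∈ Ω, ∀ y ∈ Ω,
      h x z + ⟪gradient (fun u => h u z) x, y - x⟫ ≤ h y z)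
    (hgrad : ∀ x ∈ Ω, ∀ y ∈ Ω,
      ⟪gradient (fun u => h u x) x, y - x⟫ = ⟪gradient f x, y - x⟫)
    (p : EuclideanSpace ℝ (Fin n) → EuclideanSpace ℝ (Fin n))
    (hp : ∀ z ∈ Ω, p z ∈ Ω ∧ (∀ u ∈ Ω, h (p z) z ≤ h u z) ∧
      (∀ w ∈ Ω, (∀ u ∈ Ω, h w z ≤ h u z) → w = p z))
    (x : EuclideanSpace ℝ (Fin n)) (hx : x ∈ Ω) :
    (∀ y ∈ Ω, 0 ≤ ⟪gradient f x, y - x⟫) ↔ p x = x := by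
  obtain ⟨-, hpmin, hpuniq⟩ := hp x hx
  have hstat_iff : (∀ y ∈ Ω, 0 ≤ ⟪gradient f x, y - x⟫) ↔
      ∀ y ∈ Ω, 0 ≤ ⟪gradient (fun u => h u x) x, y - x⟫ :=
    forall₂_congr fun y hy ↦ by rw [hgrad x hx y hy]
  rw [hstat_iff, ← isMinOn_iff_inner_gradient_sub_nonneg hΩconv hx
    ((hsmooth x hx).differentiable one_ne_zero x) (hconv x hx x hx), isMinOn_iff]
  constructor
  · exact fun hmin ↦ (hpuniq x hx hmin).symm
  · intro hpx u hu
    simpa only [hpx] using hpmin u hu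

theorem statement2 {n : ℕ} (Ω : Set (EuclideanSpace ℝ (Fin n)))
    (hΩc : IsClosed Ω) (hΩconv : Convex ℝ Ω) (hΩne : Ω.Nonempty)
    (f : EuclideanSpace ℝ (Fin n) → ℝ) (hf : ContDiff ℝ 1 f)
    (h : EuclideanSpace ℝ (Fin n) → EuclideanSpace ℝ (Fin n) → ℝ)
    (hsmooth : ∀ z ∈ Ω, ContDiff ℝ 1 (fun u => h u z))
    (hconv : ∀ z ∈ Ω, ∀ x ∈ Ω, ∀ y ∈ Ω,
      h x z + ⟪gradient (fun u => h u z) x, y - x⟫ ≤ h y z)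
    (hgrad : ∀ x ∈ Ω, ∀ y ∈ Ω,
      ⟪gradient (fun u => h u x) x, y - x⟫ = ⟪gradient f x, y - x⟫)
    (p : EuclideanSpace ℝ (Fin n) → EuclideanSpace ℝ (Fin n))
    (hp : ∀ z ∈ Ω, p z ∈ Ω ∧ (∀ u ∈ Ω, h (p z) z ≤ h u z) ∧
      (∀ w ∈ Ω, (∀ u ∈ Ω, h w z ≤ h u z) → w = p z))
    (x : EuclideanSpace ℝ (Fin n)) (hx : x ∈ Ω) :
    (∀ y ∈ Ω, 0 ≤ ⟪gradient f x, y - x⟫) ↔ p x = x :=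
  statement2_general Ω hΩconv f h hsmooth hconv hgrad p hp x hx
end

section
/- Let f : ℝⁿ → ℝ be C¹, {x^k} ⊂ ℝⁿ a sequence converging to x̄, and {d^k} ⊂ ℝⁿ a bounded sequence of directions with ∇f(x^k)ᵀd^k < 0 for all k. For each k let λ^k ∈ (0,1] be the Armijo steplength, i.e., the largest λ ∈ {1, δ, δ², …} with f(x^k + λd^k) ≤ f(x^k) + βλ∇f(x^k)ᵀd^k, where β, δ ∈ (0,1). If f(x^k) − f(x^k + λ^k d^k) → 0 as k → ∞, then ∇f(x^k)ᵀd^k → 0. -/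
/-!
Pass to a subsequence along which `d k → d̄`, so that `⟪∇f (x k), d k⟫ → L := ⟪∇f x̄, d̄⟫ ≤ 0`.
If `L < 0`, the Armijo inequality and `f (x k) - f (x k + λ k • d k) → 0` force the steps
`λ k = δ ^ j k` to zero. Then eventually `λ k < 1`, so the trial step `λ k / δ` was rejected, and
the mean value theorem gives points `x k + c k • d k` with `c k < λ k / δ` at which
`⟪∇f, d k⟫ > β ⟪∇f (x k), d k⟫`. These points converge to `x̄`, whence `L ≥ β L`,
impossible for `β < 1` and `L < 0`.
-/

open scoped RealInnerProductSpace Gradient Topology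
open Filter Set

variable {F : Type*} [NormedAddCommGroup F] [InnerProductSpace ℝ F] [CompleteSpace F]

def ArmijoCondition (f : F → ℝ) (β : ℝ) (x d : F) (t : ℝ) : Prop :=
  f (x + t • d) ≤ f x + β * t * ⟪∇ f x, d⟫

theorem ContDiff.continuous_gradient {f : F → ℝ} (hf : ContDiff ℝ 1 f) : Continuous (∇ f) :=
  (InnerProductSpace.toDual ℝ F).symm.continuous.comp (hf.continuous_fderiv one_ne_zero)

theorem hasDerivAt_apply_add_smul {f : F → ℝ} {p v : F} {t : ℝ}
    (hf : DifferentiableAt ℝ f (p + t • v)) :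
    HasDerivAt (fun s : ℝ => f (p + s • v)) ⟪∇ f (p + t • v), v⟫ t := by
  have hline : HasDerivAt (fun s : ℝ => p + s • v) v t := by
    simpa using ((hasDerivAt_id t).smul_const v).const_add p
  rw [inner_gradient_left]
  exact hf.hasFDerivAt.comp_hasDerivAt t hline

theorem exists_inner_gradient_eq_slope {f : F → ℝ} (hf : Differentiable ℝ f) (p v : F)
    {μ : ℝ} (hμ : 0 < μ) :
    ∃ c ∈ Ioo 0 μ, ⟪∇ f (p + c • v), v⟫ = (f (p + μ • v) - f p) / μ := by
  have hderiv (t : ℝ) := hasDerivAt_apply_add_smul (hf (p + t • v))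
  simpa using exists_hasDerivAt_eq_slope (fun s : ℝ => f (p + s • v)) _ hμ
    (fun t _ => (hderiv t).continuousAt.continuousWithinAt) (fun t _ => hderiv t)

theorem exists_lt_inner_gradient_of_not_armijoCondition {f : F → ℝ} (hf : Differentiable ℝ f)
    {β μ : ℝ} {p v : F} (hμ : 0 < μ) (hfail : ¬ ArmijoCondition f β p v μ) :
    ∃ c ∈ Ioo 0 μ, β * ⟪∇ f p, v⟫ < ⟪∇ f (p + c • v), v⟫ := by
  obtain ⟨c, hc, hslope⟩ := exists_inner_gradient_eq_slope hf p v hμ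
  refine ⟨c, hc, ?_⟩
  rw [hslope, lt_div_iff₀ hμ]
  unfold ArmijoCondition at hfail
  linarith

section Limits

variable {ι : Type*} {l : Filter ι} {f : F → ℝ} {β : ℝ} {x d : ι → F}

theorem tendsto_zero_of_armijoCondition {t : ι → ℝ} {L : ℝ} (hβ : 0 < β) (hL : L ≠ 0)
    (hg : Tendsto (fun k => ⟪∇ f (x k), d k⟫) l (𝓝 L)) (hdesc : ∀ k, ⟪∇ f (x k), d k⟫ < 0)
    (ht : ∀ k, 0 ≤ t k) (harmijo : ∀ k, ArmijoCondition f β (x k) (d k) (t k))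
    (hdiff : Tendsto (fun k => f (x k) - f (x k + t k • d k)) l (𝓝 0)) :
    Tendsto t l (𝓝 0) := by
  have hlower : Tendsto (fun k => -(f (x k) - f (x k + t k • d k)) / β) l (𝓝 0) := by
    simpa using hdiff.neg.div_const β
  have hprod : Tendsto (fun k => t k * ⟪∇ f (x k), d k⟫) l (𝓝 0) := by
    refine tendsto_of_tendsto_of_tendsto_of_le_of_le hlower tendsto_const_nhds (fun k => ?_)
      (fun k => mul_nonpos_of_nonneg_of_nonpos (ht k) (hdesc k).le)
    have := harmijo k
    unfold ArmijoCondition at this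
    rw [div_le_iff₀ hβ]
    linarith
  refine (zero_div L ▸ hprod.div hg hL).congr fun k => ?_
  exact mul_div_cancel_right₀ _ (hdesc k).ne

variable [l.NeBot] {xbar dbar : F}

theorem le_inner_gradient_of_not_armijoCondition (hf : ContDiff ℝ 1 f) {μ : ι → ℝ}
    (hx : Tendsto x l (𝓝 xbar)) (hd : Tendsto d l (𝓝 dbar)) (hμ : Tendsto μ l (𝓝 0))
    (hμpos : ∀ k, 0 < μ k) (hfail : ∀ᶠ k in l, ¬ ArmijoCondition f β (x k) (d k) (μ k)) :
    β * ⟪∇ f xbar, dbar⟫ ≤ ⟪∇ f xbar, dbar⟫ := by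
  have hpoint (k : ι) : ∃ c, ¬ ArmijoCondition f β (x k) (d k) (μ k) →
      c ∈ Ioo 0 (μ k) ∧ β * ⟪∇ f (x k), d k⟫ < ⟪∇ f (x k + c • d k), d k⟫ := by
    by_cases h : ArmijoCondition f β (x k) (d k) (μ k)
    · exact ⟨0, fun h' => absurd h h'⟩
    · obtain ⟨c, hc, hlt⟩ :=
        exists_lt_inner_gradient_of_not_armijoCondition (hf.differentiable one_ne_zero) (hμpos k) h
      exact ⟨c, fun _ => ⟨hc, hlt⟩⟩
  choose c hc using hpoint
  have hcl := hfail.mono fun k h => hc k h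
  have hc0 : Tendsto c l (𝓝 0) :=
    squeeze_zero' (hcl.mono fun k h => h.1.1.le) (hcl.mono fun k h => h.1.2.le) hμ
  have hy : Tendsto (fun k => x k + c k • d k) l (𝓝 xbar) := by
    simpa using hx.add (hc0.smul hd)
  have hgrad := hf.continuous_gradient.tendsto xbar
  exact le_of_tendsto_of_tendsto (((hgrad.comp hx).inner hd).const_mul β)
    ((hgrad.comp hy).inner hd) (hcl.mono fun k h => h.2.le)

theorem inner_gradient_eq_zero_of_armijo_backtracking (hf : ContDiff ℝ 1 f) {δ : ℝ}
    (hβ : β ∈ Ioo 0 1) (hδ : 0 < δ) (hx : Tendsto x l (𝓝 xbar)) (hd : Tendsto d l (𝓝 dbar))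
    (hdesc : ∀ k, ⟪∇ f (x k), d k⟫ < 0) {j : ι → ℕ}
    (harmijo : ∀ k, ArmijoCondition f β (x k) (d k) (δ ^ j k))
    (hlargest : ∀ k, ∀ j' < j k, ¬ ArmijoCondition f β (x k) (d k) (δ ^ j'))
    (hdiff : Tendsto (fun k => f (x k) - f (x k + δ ^ j k • d k)) l (𝓝 0)) :
    ⟪∇ f xbar, dbar⟫ = 0 := by
  have hg : Tendsto (fun k => ⟪∇ f (x k), d k⟫) l (𝓝 ⟪∇ f xbar, dbar⟫) :=
    ((hf.continuous_gradient.tendsto xbar).comp hx).inner hd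
  have hL : ⟪∇ f xbar, dbar⟫ ≤ 0 := le_of_tendsto' hg fun k => (hdesc k).le
  refine hL.antisymm (not_lt.1 fun hLneg => ?_)
  have hstep : Tendsto (fun k => δ ^ j k) l (𝓝 0) :=
    tendsto_zero_of_armijoCondition hβ.1 hLneg.ne hg hdesc (fun k => (pow_pos hδ _).le)
      harmijo hdiff
  have hj : ∀ᶠ k in l, j k ≠ 0 := by
    filter_upwards [hstep.eventually (eventually_lt_nhds one_pos)] with k hk hj0
    simp [hj0] at hk
  have hprev : Tendsto (fun k => δ ^ (j k - 1)) l (𝓝 0) := by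
    refine (by simpa using hstep.div_const δ : Tendsto (fun k => δ ^ j k / δ) l (𝓝 0)).congr' ?_
    filter_upwards [hj] with k hk
    rw [div_eq_iff hδ.ne', ← pow_succ, Nat.sub_add_cancel (Nat.pos_of_ne_zero hk)]
  have hle := le_inner_gradient_of_not_armijoCondition hf hx hd hprev (fun k => pow_pos hδ _)
    (hj.mono fun k hk => hlargest k _ (Nat.sub_lt (Nat.pos_of_ne_zero hk) one_pos))
  nlinarith [hβ.2]

end Limits

theorem statement9_general {n : ℕ} (f : EuclideanSpace ℝ (Fin n) → ℝ) (hf : ContDiff ℝ 1 f)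
    (x : ℕ → EuclideanSpace ℝ (Fin n)) (xbar : EuclideanSpace ℝ (Fin n))
    (hx : Tendsto x atTop (nhds xbar))
    (d : ℕ → EuclideanSpace ℝ (Fin n)) (M : ℝ)
    (hbd : ∀ k, ‖d k‖ ≤ M)
    (hdesc : ∀ k, ⟪gradient f (x k), d k⟫ < 0)
    (β δ : ℝ) (hβ : β ∈ Set.Ioo (0 : ℝ) 1) (hδ : δ ∈ Set.Ioo (0 : ℝ) 1)
    (j : ℕ → ℕ)
    (harmijo : ∀ k, f (x k + δ ^ j k • d k) ≤
      f (x k) + β * δ ^ j k * ⟪gradient f (x k), d k⟫)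
    (hlargest : ∀ k, ∀ j' < j k,
      ¬ (f (x k + δ ^ j' • d k) ≤ f (x k) + β * δ ^ j' * ⟪gradient f (x k), d k⟫))
    (hdiff : Tendsto (fun k => f (x k) - f (x k + δ ^ j k • d k)) atTop (nhds 0)) :
    Tendsto (fun k => ⟪gradient f (x k), d k⟫) atTop (nhds 0) := by
  refine tendsto_of_subseq_tendsto fun ns hns => ?_
  obtain ⟨dbar, -, φ, hφ, hdconv⟩ := tendsto_subseq_of_bounded (Metric.isBounded_closedBall
    (x := (0 : EuclideanSpace ℝ (Fin n))) (r := M)) (fun k => by simpa using hbd (ns k))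
  refine ⟨φ, ?_⟩
  have hsub : Tendsto (ns ∘ φ) atTop atTop := hns.comp hφ.tendsto_atTop
  have hlim := inner_gradient_eq_zero_of_armijo_backtracking hf hβ hδ.1 (hx.mono_left hsub)
    (tendsto_map'_iff.2 hdconv) hdesc harmijo hlargest (hdiff.mono_left hsub)
  rw [← hlim]
  exact ((hf.continuous_gradient.tendsto xbar).comp (hx.comp hsub)).inner hdconv

theorem statement9 {n : ℕ} (f : EuclideanSpace ℝ (Fin n) → ℝ) (hf : ContDiff ℝ 1 f)
    (x : ℕ → EuclideanSpace ℝ (Fin n)) (xbar : EuclideanSpace ℝ (Fin n))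
    (hx : Tendsto x atTop (nhds xbar))
    (d : ℕ → EuclideanSpace ℝ (Fin n)) (M : ℝ) (hM : 0 < M)
    (hbd : ∀ k, ‖d k‖ ≤ M)
    (hdesc : ∀ k, ⟪gradient f (x k), d k⟫ < 0)
    (β δ : ℝ) (hβ : β ∈ Set.Ioo (0 : ℝ) 1) (hδ : δ ∈ Set.Ioo (0 : ℝ) 1)
    (j : ℕ → ℕ)
    (harmijo : ∀ k, f (x k + δ ^ j k • d k) ≤
      f (x k) + β * δ ^ j k * ⟪gradient f (x k), d k⟫)
    (hlargest : ∀ k, ∀ j' < j k,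
      ¬ (f (x k + δ ^ j' • d k) ≤ f (x k) + β * δ ^ j' * ⟪gradient f (x k), d k⟫))
    (hdiff : Tendsto (fun k => f (x k) - f (x k + δ ^ j k • d k)) atTop (nhds 0)) :
    Tendsto (fun k => ⟪gradient f (x k), d k⟫) atTop (nhds 0) :=
  statement9_general f hf x xbar hx d M hbd hdesc β δ hβ hδ j harmijo hlargest hdiff
end

section
/- In the block-separable setting, a point x ∈ Ω = Ω₁ × ⋯ × Ω_m is stationary for min_{x∈Ω} f(x) if and only if pᵢ(x) = xᵢ for every i = 1, …, m, where pᵢ(x) = argmin_{zᵢ∈Ωᵢ} hⁱ(zᵢ, x). -/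
/-!
Stationarity over the product `Ω` decouples into the blockwise variational inequalities
`⟪∇ᵢf(x), u - xᵢ⟫ ≥ 0` for `u ∈ Ωᵢ`. By the gradient-consistency of `hⁱ` these read
`⟪∇₁hⁱ(xᵢ, x), u - xᵢ⟫ ≥ 0`, which for the convex function `hⁱ(·, x)` characterises `xᵢ` as a
minimiser over `Ωᵢ`; by uniqueness of the minimiser this means `xᵢ = pᵢ(x)`.
-/

open scoped RealInnerProductSpace

section Gradient

variable {F : Type*} [NormedAddCommGroup F] [InnerProductSpace ℝ F] [CompleteSpace F]

theorem inner_gradient_eq_fderiv (g : F → ℝ) (a d : F) : ⟪gradient g a, d⟫ = fderiv ℝ g a d :=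
  InnerProductSpace.toDual_symm_apply

theorem isMinOn_iff_inner_gradient_nonneg {s : Set F} (hs : Convex ℝ s) {g : F → ℝ} {a : F}
    (hg : DifferentiableAt ℝ g a) (ha : a ∈ s)
    (hconv : ∀ v ∈ s, g a + ⟪gradient g a, v - a⟫ ≤ g v) :
    IsMinOn g s a ↔ ∀ u ∈ s, 0 ≤ ⟪gradient g a, u - a⟫ := by
  refine ⟨fun hmin u hu => ?_, fun hstat => isMinOn_iff.mpr fun u hu => ?_⟩
  · rw [inner_gradient_eq_fderiv]
    exact hmin.localize.hasFDerivWithinAt_nonneg hg.hasFDerivAt.hasFDerivWithinAt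
      (sub_mem_posTangentConeAt_of_segment_subset (hs.segment_subset ha hu))
  · linarith [hconv u hu, hstat u hu]

end Gradient

namespace PiLp

variable {ι : Type*} [Fintype ι] [DecidableEq ι] {E : ι → Type*}
  [∀ i, NormedAddCommGroup (E i)] [∀ i, InnerProductSpace ℝ (E i)]

theorem inner_toLp_single_right (g : PiLp 2 E) (i : ι) (d : E i) :
    ⟪g, WithLp.toLp 2 (Pi.single i d)⟫ = ⟪g i, d⟫ := by
  rw [PiLp.inner_apply, Finset.sum_eq_single i] <;> simp_all

theorem inner_toLp_update_sub (g x : PiLp 2 E) (i : ι) (u : E i) :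
    ⟪g, WithLp.toLp 2 (Function.update x i u) - x⟫ = ⟪g i, u - x i⟫ := by
  rw [PiLp.inner_apply, Finset.sum_eq_single i]
  · simp
  · intro j _ hj
    simp [Function.update_of_ne hj]
  · simp

theorem forall_inner_sub_nonneg_iff (Ω : ∀ i, Set (E i)) (g : PiLp 2 E) {x : PiLp 2 E}
    (hx : ∀ i, x i ∈ Ω i) :
    (∀ y : PiLp 2 E, (∀ i, y i ∈ Ω i) → 0 ≤ ⟪g, y - x⟫) ↔
      ∀ i, ∀ u ∈ Ω i, 0 ≤ ⟪g i, u - x i⟫ := by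
  refine ⟨fun hstat i u hu => ?_, fun hblock y hy => ?_⟩
  · have hy : ∀ j, Function.update x i u j ∈ Ω j := fun j => by
      rcases eq_or_ne j i with rfl | hj
      · simpa using hu
      · simpa [Function.update_of_ne hj] using hx j
    simpa only [inner_toLp_update_sub] using hstat (WithLp.toLp 2 (Function.update x i u)) hy
  · rw [PiLp.inner_apply]
    exact Finset.sum_nonneg fun i _ => hblock i (y i) (hy i)

theorem inner_gradient_comp_toLp_update [∀ i, CompleteSpace (E i)] {f : PiLp 2 E → ℝ}
    {x : PiLp 2 E} (hf : DifferentiableAt ℝ f x) (i : ι) (d : E i) :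
    ⟪gradient (fun u => f (WithLp.toLp 2 (Function.update x i u))) (x i), d⟫ =
      ⟪gradient f x i, d⟫ := by
  have hupdate : HasFDerivAt (fun u => WithLp.toLp 2 (Function.update x i u))
      ((PiLp.continuousLinearEquiv 2 ℝ E).symm.toContinuousLinearMap.comp
        (.pi (Pi.single i (.id ℝ (E i))))) (x i) :=
    (PiLp.hasFDerivAt_toLp 2 _).comp _ (hasFDerivAt_update _ _)
  have hcomp : HasFDerivAt (fun u => f (WithLp.toLp 2 (Function.update x i u))) _ (x i) :=
    HasFDerivAt.comp (x i) (by simpa using hf.hasFDerivAt) hupdate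
  rw [inner_gradient_eq_fderiv, hcomp.fderiv, ContinuousLinearMap.comp_apply,
    ContinuousLinearMap.comp_apply, ← inner_gradient_eq_fderiv]
  convert inner_toLp_single_right _ i d using 3
  ext j
  rcases eq_or_ne j i with rfl | hj <;> simp [*]

end PiLp

theorem statement12_general {m : ℕ} {n : Fin m → ℕ}
    (Ω : ∀ i, Set (EuclideanSpace ℝ (Fin (n i))))
    (hΩconv : ∀ i, Convex ℝ (Ω i))
    (f : PiLp 2 (fun i => EuclideanSpace ℝ (Fin (n i))) → ℝ) (hf : ContDiff ℝ 1 f)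
    (hi : ∀ i, EuclideanSpace ℝ (Fin (n i)) →
      PiLp 2 (fun i => EuclideanSpace ℝ (Fin (n i))) → ℝ)
    (hismooth : ∀ i y, ContDiff ℝ 1 (fun u => hi i u y))
    (x : PiLp 2 (fun i => EuclideanSpace ℝ (Fin (n i)))) (hx : ∀ j, x j ∈ Ω j)
    (hiconv : ∀ i, ∀ u ∈ Ω i, ∀ v ∈ Ω i,
      hi i u x + ⟪gradient (fun w => hi i w x) u, v - u⟫ ≤ hi i v x)
    (higrad : ∀ i, ∀ d : EuclideanSpace ℝ (Fin (n i)), x i + d ∈ Ω i →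
      ⟪gradient (fun u => hi i u x) (x i), d⟫ =
      ⟪gradient (fun u => f (WithLp.toLp 2 (Function.update x i u))) (x i), d⟫)
    (p : ∀ i, EuclideanSpace ℝ (Fin (n i)))
    (hpmin : ∀ i, ∀ u ∈ Ω i, hi i (p i) x ≤ hi i u x)
    (hpuniq : ∀ i, ∀ w ∈ Ω i, (∀ u ∈ Ω i, hi i w x ≤ hi i u x) → w = p i) :
    (∀ y : PiLp 2 (fun i => EuclideanSpace ℝ (Fin (n i))), (∀ j, y j ∈ Ω j) →
      0 ≤ ⟪gradient f x, y - x⟫) ↔ ∀ i, p i = x i := by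
  rw [PiLp.forall_inner_sub_nonneg_iff Ω (gradient f x) hx]
  refine forall_congr' fun i => ?_
  have hmin_iff : IsMinOn (fun w => hi i w x) (Ω i) (x i) ↔ x i = p i :=
    ⟨hpuniq i _ (hx i), fun h => h ▸ isMinOn_iff.mpr (hpmin i)⟩
  rw [eq_comm, ← hmin_iff, isMinOn_iff_inner_gradient_nonneg (hΩconv i)
    ((hismooth i x).differentiable one_ne_zero _) (hx i) (hiconv i _ (hx i))]
  refine forall₂_congr fun u hu => ?_
  rw [higrad i _ (by rwa [add_sub_cancel]),
    PiLp.inner_gradient_comp_toLp_update (hf.differentiable one_ne_zero x)]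

theorem statement12 {m : ℕ} {n : Fin m → ℕ}
    (Ω : ∀ i, Set (EuclideanSpace ℝ (Fin (n i))))
    (hΩc : ∀ i, IsClosed (Ω i)) (hΩconv : ∀ i, Convex ℝ (Ω i))
    (hΩne : ∀ i, (Ω i).Nonempty)
    (f : PiLp 2 (fun i => EuclideanSpace ℝ (Fin (n i))) → ℝ) (hf : ContDiff ℝ 1 f)
    (hi : ∀ i, EuclideanSpace ℝ (Fin (n i)) →
      PiLp 2 (fun i => EuclideanSpace ℝ (Fin (n i))) → ℝ)
    (hismooth : ∀ i y, ContDiff ℝ 1 (fun u => hi i u y))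
    (x : PiLp 2 (fun i => EuclideanSpace ℝ (Fin (n i)))) (hx : ∀ j, x j ∈ Ω j)
    (hiconv : ∀ i, ∀ u ∈ Ω i, ∀ v ∈ Ω i,
      hi i u x + ⟪gradient (fun w => hi i w x) u, v - u⟫ ≤ hi i v x)
    (higrad : ∀ i, ∀ d : EuclideanSpace ℝ (Fin (n i)), x i + d ∈ Ω i →
      ⟪gradient (fun u => hi i u x) (x i), d⟫ =
      ⟪gradient (fun u => f (WithLp.toLp 2 (Function.update x i u))) (x i), d⟫)
    (p : ∀ i, EuclideanSpace ℝ (Fin (n i)))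
    (hpΩ : ∀ i, p i ∈ Ω i)
    (hpmin : ∀ i, ∀ u ∈ Ω i, hi i (p i) x ≤ hi i u x)
    (hpuniq : ∀ i, ∀ w ∈ Ω i, (∀ u ∈ Ω i, hi i w x ≤ hi i u x) → w = p i) :
    (∀ y : PiLp 2 (fun i => EuclideanSpace ℝ (Fin (n i))), (∀ j, y j ∈ Ω j) →
      0 ≤ ⟪gradient f x, y - x⟫) ↔ ∀ i, p i = x i :=
  statement12_general Ω hΩconv f hf hi hismooth x hx hiconv higrad p hpmin hpuniq
end

section
/- In the block-separable setting, for every x ∈ Ω and every i one has ∇ᵢf(x)ᵀ(pᵢ(x) − xᵢ) ≤ 0, with equality if and only if pᵢ(x) = xᵢ, where pᵢ(x) = argmin_{zᵢ∈Ωᵢ} hⁱ(zᵢ, x). -/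
open scoped RealInnerProductSpace

/-
The first-order convexity inequality at `xᵢ`, applied at the minimizer `pᵢ`, gives
`⟪∇₁hⁱ(xᵢ, x), pᵢ - xᵢ⟫ ≤ hⁱ(pᵢ, x) - hⁱ(xᵢ, x) ≤ 0`. If the left side vanishes, the same
inequality makes `xᵢ` a minimizer as well, so `xᵢ = pᵢ` by uniqueness. Since `xᵢ + (pᵢ - xᵢ) ∈ Ωᵢ`,
the gradients of `hⁱ` and of `f` agree in the direction `pᵢ - xᵢ`.
-/

section FirstOrder

variable {E : Type*} [NormedAddCommGroup E] [InnerProductSpace ℝ E]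
  {s : Set E} {h : E → ℝ} {g x p : E}

theorem inner_sub_nonpos_of_isMinOn (hsupp : ∀ v ∈ s, h x + ⟪g, v - x⟫ ≤ h v)
    (hp : IsMinOn h s p) (hx : x ∈ s) (hps : p ∈ s) : ⟪g, p - x⟫ ≤ 0 := by
  linarith [hsupp p hps, isMinOn_iff.1 hp x hx]

theorem eq_of_inner_sub_eq_zero (hsupp : ∀ v ∈ s, h x + ⟪g, v - x⟫ ≤ h v)
    (hp : IsMinOn h s p) (huniq : ∀ w ∈ s, IsMinOn h s w → w = p) (hx : x ∈ s) (hps : p ∈ s)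
    (h0 : ⟪g, p - x⟫ = 0) : p = x := by
  have hxmin : IsMinOn h s x := isMinOn_iff.2 fun u hu => by
    linarith [hsupp p hps, isMinOn_iff.1 hp u hu]
  exact (huniq x hx hxmin).symm

theorem inner_sub_nonpos_and_eq_zero_iff (hsupp : ∀ v ∈ s, h x + ⟪g, v - x⟫ ≤ h v)
    (hp : IsMinOn h s p) (huniq : ∀ w ∈ s, IsMinOn h s w → w = p) (hx : x ∈ s) (hps : p ∈ s) :
    ⟪g, p - x⟫ ≤ 0 ∧ (⟪g, p - x⟫ = 0 ↔ p = x) :=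
  ⟨inner_sub_nonpos_of_isMinOn hsupp hp hx hps,
    ⟨eq_of_inner_sub_eq_zero hsupp hp huniq hx hps, fun hpx => by simp [hpx]⟩⟩

end FirstOrder

theorem statement13_general {m : ℕ} {n : Fin m → ℕ}
    (Ω : ∀ i, Set (EuclideanSpace ℝ (Fin (n i))))
    (f : PiLp 2 (fun i => EuclideanSpace ℝ (Fin (n i))) → ℝ)
    (hi : ∀ i, EuclideanSpace ℝ (Fin (n i)) →
      PiLp 2 (fun i => EuclideanSpace ℝ (Fin (n i))) → ℝ)
    (x : PiLp 2 (fun i => EuclideanSpace ℝ (Fin (n i)))) (hx : ∀ j, x j ∈ Ω j)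
    (hiconv : ∀ i, ∀ u ∈ Ω i, ∀ v ∈ Ω i,
      hi i u x + ⟪gradient (fun w => hi i w x) u, v - u⟫ ≤ hi i v x)
    (higrad : ∀ i, ∀ d : EuclideanSpace ℝ (Fin (n i)), x i + d ∈ Ω i →
      ⟪gradient (fun u => hi i u x) (x i), d⟫ =
      ⟪gradient (fun u => f (WithLp.toLp 2 (Function.update x i u))) (x i), d⟫)
    (p : ∀ i, EuclideanSpace ℝ (Fin (n i)))
    (hpΩ : ∀ i, p i ∈ Ω i)
    (hpmin : ∀ i, ∀ u ∈ Ω i, hi i (p i) x ≤ hi i u x)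
    (hpuniq : ∀ i, ∀ w ∈ Ω i, (∀ u ∈ Ω i, hi i w x ≤ hi i u x) → w = p i)
    (i : Fin m) :
    ⟪gradient (fun u => f (WithLp.toLp 2 (Function.update x i u))) (x i), p i - x i⟫ ≤ 0 ∧
    (⟪gradient (fun u => f (WithLp.toLp 2 (Function.update x i u))) (x i), p i - x i⟫ = 0 ↔ p i = x i) := by
  rw [← higrad i (p i - x i) (by simpa using hpΩ i)]
  exact inner_sub_nonpos_and_eq_zero_iff (hiconv i (x i) (hx i)) (isMinOn_iff.2 (hpmin i))
    (fun w hw hw_min => hpuniq i w hw (isMinOn_iff.1 hw_min)) (hx i) (hpΩ i)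

theorem statement13 {m : ℕ} {n : Fin m → ℕ}
    (Ω : ∀ i, Set (EuclideanSpace ℝ (Fin (n i))))
    (hΩc : ∀ i, IsClosed (Ω i)) (hΩconv : ∀ i, Convex ℝ (Ω i))
    (hΩne : ∀ i, (Ω i).Nonempty)
    (f : PiLp 2 (fun i => EuclideanSpace ℝ (Fin (n i))) → ℝ) (hf : ContDiff ℝ 1 f)
    (hi : ∀ i, EuclideanSpace ℝ (Fin (n i)) →
      PiLp 2 (fun i => EuclideanSpace ℝ (Fin (n i))) → ℝ)
    (hismooth : ∀ i y, ContDiff ℝ 1 (fun u => hi i u y))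
    (x : PiLp 2 (fun i => EuclideanSpace ℝ (Fin (n i)))) (hx : ∀ j, x j ∈ Ω j)
    (hiconv : ∀ i, ∀ u ∈ Ω i, ∀ v ∈ Ω i,
      hi i u x + ⟪gradient (fun w => hi i w x) u, v - u⟫ ≤ hi i v x)
    (higrad : ∀ i, ∀ d : EuclideanSpace ℝ (Fin (n i)), x i + d ∈ Ω i →
      ⟪gradient (fun u => hi i u x) (x i), d⟫ =
      ⟪gradient (fun u => f (WithLp.toLp 2 (Function.update x i u))) (x i), d⟫)
    (p : ∀ i, EuclideanSpace ℝ (Fin (n i)))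
    (hpΩ : ∀ i, p i ∈ Ω i)
    (hpmin : ∀ i, ∀ u ∈ Ω i, hi i (p i) x ≤ hi i u x)
    (hpuniq : ∀ i, ∀ w ∈ Ω i, (∀ u ∈ Ω i, hi i w x ≤ hi i u x) → w = p i)
    (i : Fin m) :
    ⟪gradient (fun u => f (WithLp.toLp 2 (Function.update x i u))) (x i), p i - x i⟫ ≤ 0 ∧
    (⟪gradient (fun u => f (WithLp.toLp 2 (Function.update x i u))) (x i), p i - x i⟫ = 0 ↔ p i = x i) :=
  statement13_general Ω f hi x hx hiconv higrad p hpΩ hpmin hpuniq i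
end

section
/- Let Ω ⊆ ℝⁿ be closed and convex, f : ℝⁿ → ℝ C¹, and h : Ω × Ω → ℝ satisfy: h(·, z) is convex with unique minimizer over Ω for every z, and ∇₁h(x,x)ᵀ(y−x) = ∇f(x)ᵀ(y−x) for all x, y ∈ Ω. If x ∈ Ω is not stationary for min_Ω f, then y := argmin_{z∈Ω} h(z, x) satisfies ∇f(x)ᵀ(y − x) ≤ h(y, x) − h(x, x) < 0. -/
/-!
The gradient inequality for `h(·, x)` at `x`, together with `∇₁h(x, x) = ∇f(x)` along directions
into `Ω`, gives the first inequality. For strictness: if `h(y, x) = h(x, x)`, then `x` itself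
minimizes `h(·, x)` over the convex set `Ω`, so the first-order optimality condition for `h(·, x)`
at `x` transfers to `f` and makes `x` stationary.
-/

open scoped RealInnerProductSpace

theorem IsMinOn.inner_gradient_sub_nonneg_s17 {F : Type*} [NormedAddCommGroup F]
    [InnerProductSpace ℝ F] [CompleteSpace F] {g : F → ℝ} {s : Set F} {a z : F}
    (hmin : IsMinOn g s a) (hs : Convex ℝ s) (hg : DifferentiableAt ℝ g a)
    (ha : a ∈ s) (hz : z ∈ s) : 0 ≤ ⟪gradient g a, z - a⟫ := by
  have hcone : z - a ∈ posTangentConeAt s a :=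
    sub_mem_posTangentConeAt_of_segment_subset (hs.segment_subset ha hz)
  simpa using hmin.localize.hasFDerivWithinAt_nonneg
    hg.hasGradientAt.hasFDerivAt.hasFDerivWithinAt hcone

theorem statement17_general {n : ℕ} (Ω : Set (EuclideanSpace ℝ (Fin n)))
    (hΩconv : Convex ℝ Ω)
    (f : EuclideanSpace ℝ (Fin n) → ℝ)
    (h : EuclideanSpace ℝ (Fin n) → EuclideanSpace ℝ (Fin n) → ℝ)
    (hsmooth : ∀ z ∈ Ω, ContDiff ℝ 1 (fun u => h u z))
    (hconv : ∀ z ∈ Ω, ∀ x ∈ Ω, ∀ y ∈ Ω,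
      h x z + ⟪gradient (fun u => h u z) x, y - x⟫ ≤ h y z)
    (hgrad : ∀ x ∈ Ω, ∀ y ∈ Ω,
      ⟪gradient (fun u => h u x) x, y - x⟫ = ⟪gradient f x, y - x⟫)
    (x : EuclideanSpace ℝ (Fin n)) (hx : x ∈ Ω)
    (hnotstat : ¬ ∀ z ∈ Ω, 0 ≤ ⟪gradient f x, z - x⟫)
    (y : EuclideanSpace ℝ (Fin n)) (hyΩ : y ∈ Ω)
    (hymin : ∀ u ∈ Ω, h y x ≤ h u x) :
    ⟪gradient f x, y - x⟫ ≤ h y x - h x x ∧ h y x - h x x < 0 := by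
  have hdescent : ⟪gradient f x, y - x⟫ ≤ h y x - h x x := by
    have := hconv x hx x hx y hyΩ
    rw [hgrad x hx y hyΩ] at this
    linarith
  refine ⟨hdescent, (sub_nonpos.2 (hymin x hx)).lt_of_ne fun heq => hnotstat fun z hz => ?_⟩
  have hxmin : IsMinOn (fun u => h u x) Ω x := fun u hu => by
    simpa [sub_eq_zero.1 heq] using hymin u hu
  rw [← hgrad x hx z hz]
  exact hxmin.inner_gradient_sub_nonneg_s17 hΩconv ((hsmooth x hx).differentiable one_ne_zero x) hx hz

theorem statement17 {n : ℕ} (Ω : Set (EuclideanSpace ℝ (Fin n)))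
    (hΩc : IsClosed Ω) (hΩconv : Convex ℝ Ω) (hΩne : Ω.Nonempty)
    (f : EuclideanSpace ℝ (Fin n) → ℝ) (hf : ContDiff ℝ 1 f)
    (h : EuclideanSpace ℝ (Fin n) → EuclideanSpace ℝ (Fin n) → ℝ)
    (hsmooth : ∀ z ∈ Ω, ContDiff ℝ 1 (fun u => h u z))
    (hconv : ∀ z ∈ Ω, ∀ x ∈ Ω, ∀ y ∈ Ω,
      h x z + ⟪gradient (fun u => h u z) x, y - x⟫ ≤ h y z)
    (hgrad : ∀ x ∈ Ω, ∀ y ∈ Ω,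
      ⟪gradient (fun u => h u x) x, y - x⟫ = ⟪gradient f x, y - x⟫)
    (huniq : ∀ z ∈ Ω, ∃! w, w ∈ Ω ∧ ∀ u ∈ Ω, h w z ≤ h u z)
    (x : EuclideanSpace ℝ (Fin n)) (hx : x ∈ Ω)
    (hnotstat : ¬ ∀ z ∈ Ω, 0 ≤ ⟪gradient f x, z - x⟫)
    (y : EuclideanSpace ℝ (Fin n)) (hyΩ : y ∈ Ω)
    (hymin : ∀ u ∈ Ω, h y x ≤ h u x) :
    ⟪gradient f x, y - x⟫ ≤ h y x - h x x ∧ h y x - h x x < 0 :=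
  statement17_general Ω hΩconv f h hsmooth hconv hgrad x hx hnotstat y hyΩ hymin
end
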